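/- In C_0(J) = ⊕_{i=0}^{l} ℤ[V]^{W_{{i}}-as}, write φ ∼ φ′ if φ − φ′ ∈ ∂(C_1(J)). Then for all i, j ∈ {0,…,l} and all x ∈ V: the element Sk^{{i}}(x), viewed in the i-th summand, satisfies Sk^{{i}}(x) ∼ Sk^{{j}}(x) (viewed in the j-th summand), and Sk^{{i}}(x) ∼ det(w)·Sk^{{i}}(w·x) for every w ∈ W_aff. -/

import Mathlib

/- Common setup: an irreducible reduced crystallographic root system `R ⊂ 𝔱*` spanning `𝔱*`,
with simple roots `α 1,…,α l`, `α 0 = -θ` (θ the highest root), coroots, weight lattice,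
(level `m`) affine Weyl groups acting on `𝔱*` and `𝔱`, anti-invariants, skew-symmetrization
maps and the associated chain complexes, following Meinrenken,
"On the quantization of conjugacy classes", Section 5. -/

noncomputable section
open scoped BigOperators InnerProductSpace Classical
open Function

namespace CCQ

section Generic

variable {M : Type*} [AddCommGroup M] [Module ℝ M]

/-- The affine reflection `x ↦ x - (f x + c) • v`, where `f v = 2`. -/
def aref {f : Module.Dual ℝ M} {v : M} (h : f v = 2) (c : ℝ) : M ≃ᵃ[ℝ] M :=
  (Module.reflection h).toAffineEquiv.trans (AffineEquiv.constVAdd ℝ M (-(c • v)))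

/-- The determinant of the linear part of an affine transformation, recorded as an
integer sign (all the affine transformations considered here are products of
reflections, whose linear parts have determinant `±1`). -/
def asign (w : M ≃ᵃ[ℝ] M) : ℤ :=
  if LinearMap.det w.linear.toLinearMap = 1 then 1 else -1

/-- `φ` is anti-invariant under the subgroup `H`: `w·φ = det(w)·φ`, for the action
`(w·φ)(x) = φ(w⁻¹ x)`. -/
def AntiInv (H : Subgroup (M ≃ᵃ[ℝ] M)) (φ : M → ℤ) : Prop :=
  ∀ w ∈ H, ∀ x : M, φ (w⁻¹ x) = asign w * φ x

/-- `Sk^H(x) = Σ_{w ∈ H} det(w) · δ_{w x}` (δ-function skew-symmetrization over a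
(finite) subgroup `H`). -/
def SkOrb (H : Subgroup (M ≃ᵃ[ℝ] M)) (x : M) : M → ℤ := fun y =>
  ∑ᶠ w : H, if y = (w : M ≃ᵃ[ℝ] M) x then asign (w : M ≃ᵃ[ℝ] M) else 0

/-- `T` is a complete set of representatives of the left cosets `K/H`. -/
def IsRepFinset (H K : Subgroup (M ≃ᵃ[ℝ] M)) (T : Finset (M ≃ᵃ[ℝ] M)) : Prop :=
  (↑T : Set (M ≃ᵃ[ℝ] M)) ⊆ (K : Set (M ≃ᵃ[ℝ] M)) ∧
    ∀ w ∈ K, ∃! u, u ∈ T ∧ u⁻¹ * w ∈ H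

/-- `T` is a complete set of representatives of the left cosets `K/H` (possibly infinite). -/
def IsRepSet (H K : Subgroup (M ≃ᵃ[ℝ] M)) (T : Set (M ≃ᵃ[ℝ] M)) : Prop :=
  T ⊆ (K : Set (M ≃ᵃ[ℝ] M)) ∧ ∀ w ∈ K, ∃! u, u ∈ T ∧ u⁻¹ * w ∈ H

/-- Relative skew-symmetrization `Σ_u det(u)·(u·φ)` over a finite set of coset
representatives. -/
def SkRep (T : Finset (M ≃ᵃ[ℝ] M)) (φ : M → ℤ) : M → ℤ := fun x =>
  ∑ u ∈ T, asign u * φ (u⁻¹ x)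

/-- Skew-symmetrization `Σ_u det(u)·(u·φ)` over a (possibly infinite, pointwise finite)
set of coset representatives. -/
def SkRepSet (T : Set (M ≃ᵃ[ℝ] M)) (φ : M → ℤ) : M → ℤ := fun x =>
  ∑ᶠ u : T, asign (u : M ≃ᵃ[ℝ] M) * φ ((u : M ≃ᵃ[ℝ] M)⁻¹ x)

/-- The chain supported on the single direct summand indexed by `I`. -/
def single {n : ℕ} (I : Finset (Fin n)) (φ : M → ℤ) : Finset (Fin n) → M → ℤ := fun K =>
  if K = I then φ else 0

/-- The simplicial differential `∂`: on the summand indexed by `I = {i₀ < … < i_p}`,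
`∂φ = Σ_r (-1)^r Sk_I^{δ_r I}(φ)`, written via its components: the component of `∂c` in
the summand indexed by `K` is `Σ_{i ∉ K} (-1)^{#{j ∈ K : j < i}} Sk_{K∪{i}}^K (c (K∪{i}))`.
The skew-symmetrizations `Sk_I^K` are computed using the chosen coset representative
sets `Srep K I` for `W_K/W_I`. -/
def bdGen {n : ℕ} (Srep : Finset (Fin n) → Finset (Fin n) → Finset (M ≃ᵃ[ℝ] M))
    (c : Finset (Fin n) → M → ℤ) : Finset (Fin n) → M → ℤ := fun K x =>
  ∑ i ∈ Kᶜ, (-1 : ℤ) ^ (K.filter (fun j => j < i)).card *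
    SkRep (Srep K (insert i K)) (c (insert i K)) x

/-- Restriction of a `ℤ`-valued function to a subset (extension by zero). -/
def restr (O : Set M) (φ : M → ℤ) : M → ℤ := fun x => if x ∈ O then φ x else 0

end Generic

/-- An irreducible reduced crystallographic root system `R` in `𝔱*`, spanning `𝔱*`,
together with a choice of simple roots `α 1, …, α l` and `α 0 := -θ`, where `θ` is the
highest root.  `coroot β ∈ 𝔱` is the coroot `β^∨` of a root `β ∈ R`. -/
structure RSD (𝔱 : Type*) [AddCommGroup 𝔱] [Module ℝ 𝔱] where
  l : ℕ
  hl : 0 < l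
  R : Set (Module.Dual ℝ 𝔱)
  finR : R.Finite
  spanR : Submodule.span ℝ R = ⊤
  coroot : Module.Dual ℝ 𝔱 → 𝔱
  pair_self : ∀ β ∈ R, β (coroot β) = 2
  cryst : ∀ β ∈ R, ∀ γ ∈ R, ∃ n : ℤ, γ (coroot β) = (n : ℝ)
  reduced : ∀ β ∈ R, ∀ t : ℝ, t • β ∈ R → t = 1 ∨ t = -1
  reflect_mem : ∀ β ∈ R, ∀ γ ∈ R, γ - γ (coroot β) • β ∈ R
  α : Fin (l + 1) → Module.Dual ℝ 𝔱
  α_mem : ∀ i, α i ∈ R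
  indep : LinearIndependent ℝ fun i : Fin l => α i.succ
  base : ∀ β ∈ R, (∃ c : Fin l → ℕ, β = ∑ i, (c i : ℝ) • α i.succ) ∨
    ∃ c : Fin l → ℕ, β = -∑ i, (c i : ℝ) • α i.succ
  highest : ∀ β ∈ R, ∃ c : Fin l → ℕ, -α 0 - β = ∑ i, (c i : ℝ) • α i.succ
  irred : ∀ T : Set (Fin l), T.Nonempty → Tᶜ.Nonempty →
    ∃ i ∈ T, ∃ j ∈ Tᶜ, α i.succ (coroot (α j.succ)) ≠ 0

namespace RSD

variable {𝔱 : Type*} [AddCommGroup 𝔱] [Module ℝ 𝔱] (S : RSD 𝔱)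

/-- The highest root `θ`. -/
def theta : Module.Dual ℝ 𝔱 := -S.α 0

/-- The Kronecker delta `δ_{i,0}`. -/
def kd (i : Fin (S.l + 1)) : ℝ := if i = 0 then 1 else 0

/-- The positive roots. -/
def posRoots : Finset (Module.Dual ℝ 𝔱) :=
  S.finR.toFinset.filter fun β => ∃ c : Fin S.l → ℕ, β = ∑ i, (c i : ℝ) • S.α i.succ

/-- `ρ`, the half-sum of the positive roots. -/
def rho : Module.Dual ℝ 𝔱 := (2 : ℝ)⁻¹ • ∑ β ∈ S.posRoots, β

/-- The dual Coxeter number `h^∨ = 1 + ⟨ρ, θ^∨⟩`. -/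
def hv : ℝ := 1 + S.rho (S.coroot S.theta)

/-- The weight lattice `Λ* = {μ : ⟨μ, β^∨⟩ ∈ ℤ for all β ∈ R}`. -/
def wlat : Set (Module.Dual ℝ 𝔱) := {μ | ∀ β ∈ S.R, ∃ n : ℤ, μ (S.coroot β) = (n : ℝ)}

theorem pairD (i : Fin (S.l + 1)) :
    Module.Dual.eval ℝ 𝔱 (S.coroot (S.α i)) (S.α i) = 2 := by
  simpa using S.pair_self (S.α i) (S.α_mem i)

theorem pairDR {β : Module.Dual ℝ 𝔱} (hβ : β ∈ S.R) :
    Module.Dual.eval ℝ 𝔱 (S.coroot β) β = 2 := by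
  simpa using S.pair_self β hβ

/-- The linear reflection `s_{α_i} : ν ↦ ν - ⟨ν, α_i^∨⟩ α_i` on `𝔱*`. -/
def srefl (i : Fin (S.l + 1)) : Module.Dual ℝ 𝔱 ≃ₗ[ℝ] Module.Dual ℝ 𝔱 :=
  Module.reflection (S.pairD i)

/-- The linear reflection `s_β` on `𝔱*`, for a root `β ∈ R`. -/
def sreflRoot {β : Module.Dual ℝ 𝔱} (hβ : β ∈ S.R) :
    Module.Dual ℝ 𝔱 ≃ₗ[ℝ] Module.Dual ℝ 𝔱 :=
  Module.reflection (S.pairDR hβ)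

/-- The Weyl group `W` acting on `𝔱*` (viewed inside the group of affine
transformations of `𝔱*`): the group generated by the reflections `s_β`, `β ∈ R`. -/
def WeylA : Subgroup (Module.Dual ℝ 𝔱 ≃ᵃ[ℝ] Module.Dual ℝ 𝔱) :=
  Subgroup.closure {w | ∃ β, ∃ hβ : β ∈ S.R, w = (S.sreflRoot hβ).toAffineEquiv}

/-- The subgroup `W̄_I ⊆ W` of linear automorphisms of `𝔱*` generated by the
reflections `s_{α_i}`, `i ∉ I`. -/
def WbarI (I : Finset (Fin (S.l + 1))) :
    Subgroup (Module.Dual ℝ 𝔱 ≃ₗ[ℝ] Module.Dual ℝ 𝔱) :=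
  Subgroup.closure {e | ∃ i ∉ I, e = S.srefl i}

/-- The level `m` affine reflection `σ_i : ν ↦ ν - (⟨ν,α_i^∨⟩ + m δ_{i,0}) α_i` of `𝔱*`. -/
def sigma (m : ℝ) (i : Fin (S.l + 1)) :
    Module.Dual ℝ 𝔱 ≃ᵃ[ℝ] Module.Dual ℝ 𝔱 :=
  aref (S.pairD i) (m * S.kd i)

/-- The level `m` affine Weyl group `W_aff(m)`, acting on `𝔱*`. -/
def WaffA (m : ℝ) : Subgroup (Module.Dual ℝ 𝔱 ≃ᵃ[ℝ] Module.Dual ℝ 𝔱) :=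
  Subgroup.closure (Set.range (S.sigma m))

/-- The subgroup `W_I ⊆ W_aff(m)` generated by the `σ_i` with `i ∉ I`. -/
def WIA (m : ℝ) (I : Finset (Fin (S.l + 1))) :
    Subgroup (Module.Dual ℝ 𝔱 ≃ᵃ[ℝ] Module.Dual ℝ 𝔱) :=
  Subgroup.closure {w | ∃ i ∉ I, w = S.sigma m i}

/-- `ℤ[Λ*]^{W_I-as}`: finitely supported functions `Λ* → ℤ` that are `W_I`-anti-invariant. -/
def ZLamAS (m : ℝ) (I : Finset (Fin (S.l + 1))) : Set (Module.Dual ℝ 𝔱 → ℤ) :=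
  {φ | (support φ).Finite ∧ support φ ⊆ S.wlat ∧ AntiInv (S.WIA m I) φ}

/-- `ℤ[[Λ*]]^{W_aff-as}`: all functions `Λ* → ℤ` that are `W_aff(m)`-anti-invariant. -/
def ZZLamAS (m : ℝ) : Set (Module.Dual ℝ 𝔱 → ℤ) :=
  {φ | support φ ⊆ S.wlat ∧ AntiInv (S.WaffA m) φ}

/-- The chain group `C_p = ⊕_{|I| = p+1} ℤ[Λ*]^{W_I-as}`, realized as the set of
families `c` with `c I ∈ ℤ[Λ*]^{W_I-as}` for `#I = p+1` and `c I = 0` otherwise. -/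
def ChainA (m : ℝ) (p : ℕ) : Set (Finset (Fin (S.l + 1)) → Module.Dual ℝ 𝔱 → ℤ) :=
  {c | ∀ I, (I.card = p + 1 → c I ∈ S.ZLamAS m I) ∧ (I.card ≠ p + 1 → c I = 0)}

/-- The family `Srep` provides coset representatives of `W_K/W_I` for all `K ⊆ I`. -/
def RepFamilyA (m : ℝ)
    (Srep : Finset (Fin (S.l + 1)) → Finset (Fin (S.l + 1)) →
      Finset (Module.Dual ℝ 𝔱 ≃ᵃ[ℝ] Module.Dual ℝ 𝔱)) : Prop :=
  ∀ K I : Finset (Fin (S.l + 1)), K.Nonempty → K ⊆ I →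
    IsRepFinset (S.WIA m I) (S.WIA m K) (Srep K I)

/-- The family `Seps` provides coset representatives of `W_aff(m)/W_{{i}}`. -/
def RepEpsA (m : ℝ)
    (Seps : Fin (S.l + 1) → Set (Module.Dual ℝ 𝔱 ≃ᵃ[ℝ] Module.Dual ℝ 𝔱)) : Prop :=
  ∀ i, IsRepSet (S.WIA m {i}) (S.WaffA m) (Seps i)

/-- The augmentation `ε : C_0 → ℤ[[Λ*]]^{W_aff-as}`, given on the summand indexed by
`{i}` by `Σ_u det(u)·(u·φ)`, `u` running over the coset representatives `Seps i`. -/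
def epsA (Seps : Fin (S.l + 1) → Set (Module.Dual ℝ 𝔱 ≃ᵃ[ℝ] Module.Dual ℝ 𝔱))
    (c : Finset (Fin (S.l + 1)) → Module.Dual ℝ 𝔱 → ℤ) : Module.Dual ℝ 𝔱 → ℤ := fun x =>
  ∑ i, SkRepSet (Seps i) (c {i}) x

/-- The orbit of `μ ∈ 𝔱*` under the level `m` affine Weyl group. -/
def orbA (m : ℝ) (μ : Module.Dual ℝ 𝔱) : Set (Module.Dual ℝ 𝔱) :=
  {ν | ∃ w ∈ S.WaffA m, ν = w μ}

/-- `Λ*_{I,k} = {μ ∈ Λ* : ⟨μ,α_i^∨⟩ + k δ_{i,0} ≥ 0 for all i ∉ I}`. -/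
def LamIk (k : ℝ) (I : Finset (Fin (S.l + 1))) : Set (Module.Dual ℝ 𝔱) :=
  {μ ∈ S.wlat | ∀ i ∉ I, μ (S.coroot (S.α i)) + k * S.kd i ≥ 0}

/-- `Λ*_k`, the set of level `k` weights. -/
def LamK (k : ℝ) : Set (Module.Dual ℝ 𝔱) :=
  {μ ∈ S.wlat | ∀ i, μ (S.coroot (S.α i)) + k * S.kd i ≥ 0}

/-- The positive roots of `R_I = R ∩ ℤ-span(𝔖_I)` relative to the base
`𝔖_I = {α_i : i ∉ I}`: the roots that are `ℕ`-combinations of `𝔖_I`. -/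
def posRootsI (I : Finset (Fin (S.l + 1))) : Finset (Module.Dual ℝ 𝔱) :=
  S.finR.toFinset.filter fun β =>
    ∃ c : Fin (S.l + 1) → ℕ, (∀ i ∈ I, c i = 0) ∧ β = ∑ i, (c i : ℝ) • S.α i

/-- `ρ_I`, the half-sum of the positive roots of `R_I`. -/
def rhoI (I : Finset (Fin (S.l + 1))) : Module.Dual ℝ 𝔱 :=
  (2 : ℝ)⁻¹ • ∑ β ∈ S.posRootsI I, β

/-- `ν_I = (ρ - ρ_I)/h^∨`. -/
def nuI (I : Finset (Fin (S.l + 1))) : Module.Dual ℝ 𝔱 := S.hv⁻¹ • (S.rho - S.rhoI I)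

theorem pairB (i : Fin (S.l + 1)) : S.α i (S.coroot (S.α i)) = 2 :=
  S.pair_self (S.α i) (S.α_mem i)

/-- The affine reflection `r_i : ξ ↦ ξ - (⟨α_i,ξ⟩ + δ_{i,0}) α_i^∨` of `𝔱`, i.e. the
orthogonal (for the basic inner product) reflection in the hyperplane
`{ξ : ⟨α_i,ξ⟩ + δ_{i,0} = 0}`. -/
def rrefl (i : Fin (S.l + 1)) : 𝔱 ≃ᵃ[ℝ] 𝔱 := aref (S.pairB i) (S.kd i)

/-- The affine Weyl group `W_aff` acting on `𝔱`, generated by `r_0, …, r_l`. -/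
def WaffB : Subgroup (𝔱 ≃ᵃ[ℝ] 𝔱) := Subgroup.closure (Set.range S.rrefl)

/-- The subgroup `W_I ⊆ W_aff` generated by the `r_i` with `i ∉ I`. -/
def WIB (I : Finset (Fin (S.l + 1))) : Subgroup (𝔱 ≃ᵃ[ℝ] 𝔱) :=
  Subgroup.closure {w | ∃ i ∉ I, w = S.rrefl i}

/-- The orbit `V = W_aff · ξ ⊆ 𝔱`. -/
def orbB (ξ : 𝔱) : Set 𝔱 := {x | ∃ w ∈ S.WaffB, x = w ξ}

/-- `ℓ(x) = min {ℓ(w) : w ∈ W_aff, x = w·ξ}`: the minimal length of a word in the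
generators `r_0,…,r_l` moving `ξ` to `x`. -/
def lenPt (ξ x : 𝔱) : ℕ :=
  sInf {n | ∃ L : List (Fin (S.l + 1)), L.length = n ∧ x = (L.map S.rrefl).prod ξ}

/-- `𝔱_{I,+} = {ξ : ⟨α_i,ξ⟩ + δ_{i,0} ≥ 0 for all i ∉ I}`. -/
def tplus (I : Finset (Fin (S.l + 1))) : Set 𝔱 := {ξ | ∀ i ∉ I, S.α i ξ + S.kd i ≥ 0}

/-- `V̄^I = V ∩ 𝔱_{I,+}`. -/
def VbarI (ξ : 𝔱) (I : Finset (Fin (S.l + 1))) : Set 𝔱 := S.orbB ξ ∩ S.tplus I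

/-- `V^I = V ∩ int(𝔱_{I,+})`. -/
def VIset [TopologicalSpace 𝔱] (ξ : 𝔱) (I : Finset (Fin (S.l + 1))) : Set 𝔱 :=
  S.orbB ξ ∩ interior (S.tplus I)

/-- `ℤ[V]^{W_I-as}`: finitely supported functions `V → ℤ` that are `W_I`-anti-invariant. -/
def ZVAS (ξ : 𝔱) (I : Finset (Fin (S.l + 1))) : Set (𝔱 → ℤ) :=
  {φ | (support φ).Finite ∧ support φ ⊆ S.orbB ξ ∧ AntiInv (S.WIB I) φ}

/-- The chain group `C_p(J) = ⊕_{|I| = p+1} ℤ[V]^{W_I-as}`. -/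
def ChainB (ξ : 𝔱) (p : ℕ) : Set (Finset (Fin (S.l + 1)) → 𝔱 → ℤ) :=
  {c | ∀ I, (I.card = p + 1 → c I ∈ S.ZVAS ξ I) ∧ (I.card ≠ p + 1 → c I = 0)}

/-- The family `Srep` provides coset representatives of `W_K/W_I` for all `K ⊆ I`
(affine Weyl group acting on `𝔱`). -/
def RepFamilyB (Srep : Finset (Fin (S.l + 1)) → Finset (Fin (S.l + 1)) →
    Finset (𝔱 ≃ᵃ[ℝ] 𝔱)) : Prop :=
  ∀ K I : Finset (Fin (S.l + 1)), K.Nonempty → K ⊆ I →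
    IsRepFinset (S.WIB I) (S.WIB K) (Srep K I)

/-- The filtration `F_N C_p(J)`: the subgroup generated by the basis elements
`β_I(x) = Sk^I(x)` with `#I = p+1`, `x ∈ V^I`, `ℓ(x) ≤ N`. -/
def FNB [TopologicalSpace 𝔱] (ξ : 𝔱) (N : ℤ) (p : ℕ) :
    AddSubgroup (Finset (Fin (S.l + 1)) → 𝔱 → ℤ) :=
  AddSubgroup.closure {c | ∃ I x, I.card = p + 1 ∧ x ∈ S.VIset ξ I ∧
    (S.lenPt ξ x : ℤ) ≤ N ∧ c = single I (SkOrb (S.WIB I) x)}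

/-- The homotopy operator `h_i`, defined on basis elements by `h_i β_I(x) = 0` if
`i ∈ I` and `h_i β_I(x) = (-1)^{#{j ∈ I : j < i}} β_{I∪{i}}(x)` if `i ∉ I` (the
coefficient of `β_I(x)`, `x ∈ V^I`, in an anti-invariant `φ` is `φ(x)`). -/
def hBmap [TopologicalSpace 𝔱] (ξ : 𝔱) (i : Fin (S.l + 1))
    (c : Finset (Fin (S.l + 1)) → 𝔱 → ℤ) : Finset (Fin (S.l + 1)) → 𝔱 → ℤ := fun K y =>
  if i ∈ K then
    ∑ᶠ x : S.VIset ξ (K.erase i),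
      (-1 : ℤ) ^ ((K.erase i).filter (fun j => j < i)).card * c (K.erase i) (x : 𝔱) *
        SkOrb (S.WIB K) (x : 𝔱) y
  else 0

/-- `A_i = id - h_i ∂ - ∂ h_i`. -/
def AiB [TopologicalSpace 𝔱] (ξ : 𝔱)
    (Srep : Finset (Fin (S.l + 1)) → Finset (Fin (S.l + 1)) → Finset (𝔱 ≃ᵃ[ℝ] 𝔱))
    (i : Fin (S.l + 1)) (c : Finset (Fin (S.l + 1)) → 𝔱 → ℤ) :
    Finset (Fin (S.l + 1)) → 𝔱 → ℤ :=
  c - S.hBmap ξ i (bdGen Srep c) - bdGen Srep (S.hBmap ξ i c)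

/-- `A = A_0 ∘ A_1 ∘ ⋯ ∘ A_l`. -/
def Acomp [TopologicalSpace 𝔱] (ξ : 𝔱)
    (Srep : Finset (Fin (S.l + 1)) → Finset (Fin (S.l + 1)) → Finset (𝔱 ≃ᵃ[ℝ] 𝔱))
    (c : Finset (Fin (S.l + 1)) → 𝔱 → ℤ) : Finset (Fin (S.l + 1)) → 𝔱 → ℤ :=
  (List.finRange (S.l + 1)).foldr (fun i d => S.AiB ξ Srep i d) c

end RSD

end CCQ

/- For nonempty `I`, the group `W_I` fixes a point: any `l` of the affine simple roots
`α 0, …, α l` are linearly independent (their only relation is `θ = Σ aᵢ αᵢ` with all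
`aᵢ ≥ 1`), so the walls indexed by the complement of `I` meet. Its linear parts permute the
finite spanning set `R`, hence `W_I` is finite and `Sk^I(x)` lies in `ℤ[V]^{W_I-as}`.
Skew-symmetrizing `Sk^I(x)` over `W_K/W_I` gives `Sk^K(x)`, so for `i < j`,
`∂ Sk^{{i,j}}(x) = Sk^{{j}}(x) - Sk^{{i}}(x)`. For the second relation it suffices to treat
a generator `r_k` (the relation is stable under products and inverses): choosing `j ≠ k`,
`r_k ∈ W_{{j}}`, so
`Sk^{{i}}(x) ∼ Sk^{{j}}(x) = det(r_k) Sk^{{j}}(r_k x) ∼ det(r_k) Sk^{{i}}(r_k x)`. -/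

namespace CCQ

section Sign

variable {M : Type*} [AddCommGroup M] [Module ℝ M]

def affineDet : (M ≃ᵃ[ℝ] M) →* ℝˣ := LinearEquiv.det.comp AffineEquiv.linearHom

def detPmOne : Subgroup (M ≃ᵃ[ℝ] M) := (rootsOfUnity 2 ℝ).comap affineDet

lemma mem_detPmOne_of_mul_self {w : M ≃ᵃ[ℝ] M} (h : w * w = 1) : w ∈ detPmOne := by
  rw [detPmOne, Subgroup.mem_comap, mem_rootsOfUnity, pow_two, ← map_mul, h, map_one]

lemma asign_eq_affineDet {w : M ≃ᵃ[ℝ] M} (hw : w ∈ detPmOne) :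
    (asign w : ℝ) = affineDet w := by
  have hsq : (affineDet w : ℝ) * affineDet w = 1 := by
    rw [← Units.val_mul, ← pow_two, (mem_rootsOfUnity 2 _).mp hw, Units.val_one]
  have hdet : (affineDet w : ℝ) = LinearMap.det w.linear.toLinearMap := LinearEquiv.coe_det _
  rcases mul_self_eq_one_iff.mp hsq with h | h <;> rw [h] at hdet <;> norm_num [asign, h, ← hdet]

lemma asign_mul {w u : M ≃ᵃ[ℝ] M} (hw : w ∈ detPmOne) (hu : u ∈ detPmOne) :
    asign (w * u) = asign w * asign u := by
  have := asign_eq_affineDet (mul_mem hw hu)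
  rw [map_mul, Units.val_mul, ← asign_eq_affineDet hw, ← asign_eq_affineDet hu] at this
  exact_mod_cast this

lemma asign_mul_self (w : M ≃ᵃ[ℝ] M) : asign w * asign w = 1 := by
  unfold asign; split_ifs <;> norm_num

lemma asign_one : asign (1 : M ≃ᵃ[ℝ] M) = 1 := by
  have : LinearMap.det (1 : M ≃ᵃ[ℝ] M).linear.toLinearMap = 1 := LinearMap.det_id
  simp [asign, this]

lemma asign_inv {w : M ≃ᵃ[ℝ] M} (hw : w ∈ detPmOne) : asign w⁻¹ = asign w := by
  have h := asign_mul (inv_mem hw) hw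
  rw [inv_mul_cancel, asign_one] at h
  linear_combination -asign w * h - asign w⁻¹ * asign_mul_self w

end Sign

section SkewSymmetrization

variable {M : Type*} [AddCommGroup M] [Module ℝ M] {H K : Subgroup (M ≃ᵃ[ℝ] M)}

lemma support_SkOrb_subset (x : M) :
    support (SkOrb H x) ⊆ (fun w : M ≃ᵃ[ℝ] M => w x) '' H := by
  intro y hy
  by_contra hxy
  exact hy (finsum_eq_zero_of_forall_eq_zero fun w => if_neg fun h => hxy ⟨w, w.2, h.symm⟩)

lemma inv_apply_eq_iff (w : M ≃ᵃ[ℝ] M) {y z : M} : w⁻¹ y = z ↔ y = w z :=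
  w.toEquiv.symm_apply_eq

lemma SkOrb_apply_of_mem (hH : H ≤ detPmOne) {v : M ≃ᵃ[ℝ] M} (hv : v ∈ H)
    (x : M) : SkOrb H (v x) = asign v • SkOrb H x := by
  funext y
  rw [Pi.smul_apply, smul_eq_mul, SkOrb, SkOrb, mul_finsum]
  conv_rhs => rw [← finsum_comp_equiv (Equiv.mulRight (⟨v, hv⟩ : H))]
  refine finsum_congr fun w => ?_
  simp only [Equiv.coe_mulRight, Subgroup.coe_mul, mul_ite, mul_zero, AffineEquiv.coe_mul,
    comp_apply, asign_mul (hH w.2) (hH hv), mul_left_comm (asign v), asign_mul_self, mul_one]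

lemma antiInv_SkOrb (hH : H ≤ detPmOne) (x : M) : AntiInv H (SkOrb H x) := by
  intro w hw y
  rw [SkOrb, SkOrb, mul_finsum]
  conv_rhs => rw [← finsum_comp_equiv (Equiv.mulLeft (⟨w, hw⟩ : H))]
  refine finsum_congr fun u => ?_
  simp only [Equiv.coe_mulLeft, Subgroup.coe_mul, mul_ite, mul_zero, AffineEquiv.coe_mul,
    comp_apply, inv_apply_eq_iff, asign_mul (hH hw) (hH u.2), ← mul_assoc, asign_mul_self,
    one_mul]

lemma SkRep_SkOrb [Finite H] {T : Finset (M ≃ᵃ[ℝ] M)} (hT : IsRepFinset H K T) (hHK : H ≤ K)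
    (hK : K ≤ detPmOne) (x : M) : SkRep T (SkOrb H x) = SkOrb K x := by
  have hmem : ∀ p : T × H, (p.1 : M ≃ᵃ[ℝ] M) * p.2 ∈ K := fun p =>
    mul_mem (hT.1 p.1.2) (hHK p.2.2)
  have hbij : Bijective fun p : T × H => (⟨_, hmem p⟩ : K) := by
    constructor
    · rintro ⟨u, w⟩ ⟨u', w'⟩ h
      have h : (u : M ≃ᵃ[ℝ] M) * w = u' * w' := congrArg Subtype.val h
      obtain ⟨_, -, huniq⟩ := hT.2 _ (hmem (u, w))
      have hu : u = u' := Subtype.ext <| (huniq u ⟨u.2, by simp⟩).trans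
        (huniq u' ⟨u'.2, by rw [h]; simp⟩).symm
      subst hu
      exact Prod.ext rfl (Subtype.ext (mul_left_cancel h))
    · rintro ⟨v, hv⟩
      obtain ⟨u, ⟨huT, huv⟩, -⟩ := hT.2 v hv
      exact ⟨(⟨u, huT⟩, ⟨u⁻¹ * v, huv⟩), Subtype.ext (mul_inv_cancel_left u v)⟩
  funext y
  rw [SkOrb, ← finsum_comp_equiv (Equiv.ofBijective _ hbij), finsum_curry _ (Set.toFinite _),
    SkRep, ← Finset.sum_coe_sort, ← finsum_eq_sum_of_fintype]
  refine finsum_congr fun u => ?_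
  rw [SkOrb, mul_finsum]
  refine finsum_congr fun w => ?_
  simp only [Equiv.ofBijective_apply, mul_ite, mul_zero, AffineEquiv.coe_mul, comp_apply,
    inv_apply_eq_iff, asign_mul (hK (hT.1 u.2)) (hK (hHK w.2))]

end SkewSymmetrization

section LinearAlgebra

variable {K V : Type*} [Field K] [AddCommGroup V] [Module K V]

lemma exists_forall_dual_apply_eq [FiniteDimensional K V] {ι : Type*} [Fintype ι]
    {f : ι → Module.Dual K V} (hf : LinearIndependent K f) (c : ι → K) :
    ∃ p : V, ∀ i, f i p = c i := by
  classical
  obtain ⟨Φ, hΦ⟩ := LinearMap.dualMap_surjective_of_injective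
    (linearIndependent_iff_injective_fintypeLinearCombination.mp hf)
    (Fintype.linearCombination K c)
  refine ⟨(Module.evalEquiv K V).symm Φ, fun i => ?_⟩
  have := LinearMap.congr_fun hΦ (Pi.single i 1)
  rwa [LinearMap.dualMap_apply, Fintype.linearCombination_apply_single,
    Fintype.linearCombination_apply_single, one_smul, one_smul,
    ← Module.apply_evalEquiv_symm_apply] at this

def dualStabilizer (R : Set (Module.Dual K V)) : Subgroup (V ≃ₗ[K] V) where
  carrier := {e | ∀ γ, γ ∘ₗ e.toLinearMap ∈ R ↔ γ ∈ R}
  mul_mem' {e e'} he he' γ := (he' _).trans (he γ)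
  one_mem' γ := Iff.rfl
  inv_mem' {e} he γ := by
    have hcancel : (γ ∘ₗ e⁻¹.toLinearMap) ∘ₗ e.toLinearMap = γ := by ext; simp
    rw [← he, hcancel]

lemma finite_dualStabilizer [FiniteDimensional K V] {R : Set (Module.Dual K V)} (hR : R.Finite)
    (hspan : Submodule.span K R = ⊤) : Finite (dualStabilizer R) := by
  have : Finite R := hR.to_subtype
  refine Finite.of_injective (fun e : dualStabilizer R => fun γ : R =>
    (⟨γ ∘ₗ e.1.toLinearMap, (e.2 γ).mpr γ.2⟩ : R)) fun e e' h => ?_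
  have hdual : e.1.toLinearMap.dualMap = e'.1.toLinearMap.dualMap :=
    LinearMap.ext_on hspan fun γ hγ => congrArg Subtype.val (congrFun h ⟨γ, hγ⟩)
  exact Subtype.ext (LinearEquiv.toLinearMap_injective
    ((Module.dualMap_dualMap_eq_iff K V).mp (congrArg LinearMap.dualMap hdual)))

lemma mem_dualStabilizer_of_mul_self {R : Set (Module.Dual K V)} {e : V ≃ₗ[K] V}
    (he : e * e = 1) (hR : ∀ γ ∈ R, γ ∘ₗ e.toLinearMap ∈ R) :
    e ∈ dualStabilizer R := by
  refine fun γ => ⟨fun h => ?_, hR γ⟩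
  have hγ : (γ ∘ₗ e.toLinearMap) ∘ₗ e.toLinearMap = γ := by
    ext x
    simpa using congrArg (fun f => γ (f x)) he
  simpa [hγ] using hR _ h

end LinearAlgebra

section AffineReflection

variable {M : Type*} [AddCommGroup M] [Module ℝ M] {f : Module.Dual ℝ M} {v : M}

lemma aref_apply (h : f v = 2) (c : ℝ) (x : M) : aref h c x = x - f x • v - c • v := by
  show -(c • v) + Module.reflection h x = _
  rw [Module.reflection_apply]
  abel

lemma aref_linear (h : f v = 2) (c : ℝ) : (aref h c).linear = Module.reflection h := rfl

lemma aref_mul_self (h : f v = 2) (c : ℝ) : aref h c * aref h c = 1 := by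
  ext x
  show aref h c (aref h c x) = x
  simp only [aref_apply, map_sub, map_smul, h, smul_eq_mul, sub_smul, mul_smul]
  module

end AffineReflection

section Boundary

variable {M : Type*} [AddCommGroup M] [Module ℝ M] {n : ℕ}
  (Srep : Finset (Fin n) → Finset (Fin n) → Finset (M ≃ᵃ[ℝ] M))

def bdGenHom : (Finset (Fin n) → M → ℤ) →+ (Finset (Fin n) → M → ℤ) where
  toFun := bdGen Srep
  map_zero' := by funext K x; simp [bdGen, SkRep]
  map_add' c c' := by
    funext K x
    simp [bdGen, SkRep, mul_add, Finset.sum_add_distrib]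

lemma bdGen_single_of_insert_eq {I K : Finset (Fin n)} {k : Fin n} (hk : k ∉ K)
    (hI : insert k K = I) (φ : M → ℤ) :
    bdGen Srep (single I φ) K = (-1 : ℤ) ^ (K.filter (· < k)).card • SkRep (Srep K I) φ := by
  funext x
  refine (Finset.sum_eq_single_of_mem k (Finset.mem_compl.mpr hk) fun m hm hmk => ?_).trans ?_
  · have hne : insert m K ≠ I := by
      rintro rfl
      have hmem : m ∈ insert k K := hI ▸ Finset.mem_insert_self m K
      exact (Finset.mem_insert.mp hmem).elim hmk (Finset.mem_compl.mp hm)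
    simp [single, hne, SkRep]
  · simp [single, hI]

lemma bdGen_single_eq_zero {I K : Finset (Fin n)} (h : ∀ k ∉ K, insert k K ≠ I)
    (φ : M → ℤ) :
    bdGen Srep (single I φ) K = 0 := by
  funext x
  refine Finset.sum_eq_zero fun k hk => ?_
  simp [single, h k (Finset.mem_compl.mp hk), SkRep]

end Boundary

namespace RSD

variable {𝔱 : Type*} [AddCommGroup 𝔱] [Module ℝ 𝔱] (S : RSD 𝔱)

lemma rrefl_mul_self (k : Fin (S.l + 1)) : S.rrefl k * S.rrefl k = 1 := aref_mul_self _ _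

lemma rrefl_apply_eq_self {k : Fin (S.l + 1)} {p : 𝔱} (h : S.α k p + S.kd k = 0) :
    S.rrefl k p = p := by
  rw [rrefl, aref_apply, sub_sub, ← add_smul, h, zero_smul, sub_zero]

lemma rrefl_mem_WaffB (k : Fin (S.l + 1)) : S.rrefl k ∈ S.WaffB :=
  Subgroup.subset_closure ⟨k, rfl⟩

lemma rrefl_mem_WIB {k : Fin (S.l + 1)} {I : Finset (Fin (S.l + 1))} (hk : k ∉ I) :
    S.rrefl k ∈ S.WIB I :=
  Subgroup.subset_closure ⟨k, hk, rfl⟩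

lemma WaffB_le_detPmOne : S.WaffB ≤ detPmOne :=
  (Subgroup.closure_le _).mpr <| Set.range_subset_iff.mpr fun k =>
    mem_detPmOne_of_mul_self (S.rrefl_mul_self k)

lemma WIB_le_WaffB (I : Finset (Fin (S.l + 1))) : S.WIB I ≤ S.WaffB :=
  (Subgroup.closure_le _).mpr fun _ ⟨k, _, hw⟩ => hw ▸ S.rrefl_mem_WaffB k

lemma WIB_anti {I I' : Finset (Fin (S.l + 1))} (h : I ⊆ I') : S.WIB I' ≤ S.WIB I :=
  (Subgroup.closure_le _).mpr fun _ ⟨_, hk, hw⟩ => hw ▸ S.rrefl_mem_WIB fun hkI => hk (h hkI)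

lemma WIB_le_detPmOne (I : Finset (Fin (S.l + 1))) : S.WIB I ≤ detPmOne :=
  (S.WIB_le_WaffB I).trans S.WaffB_le_detPmOne

lemma apply_mem_orbB {ξ x : 𝔱} (hx : x ∈ S.orbB ξ) {w : 𝔱 ≃ᵃ[ℝ] 𝔱}
    (hw : w ∈ S.WaffB) : w x ∈ S.orbB ξ := by
  obtain ⟨v, hv, rfl⟩ := hx
  exact ⟨w * v, mul_mem hw hv, rfl⟩

lemma eq_zero_of_sum_smul_α_eq_zero {b : Fin (S.l + 1) → ℝ} (hb : ∑ k, b k • S.α k = 0)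
    {i₀ : Fin (S.l + 1)} (hi₀ : b i₀ = 0) : b = 0 := by
  obtain ⟨j, hj⟩ : ∃ j : Fin S.l, i₀ = 0 ∨ i₀ = j.succ := by
    by_cases h : i₀ = 0
    · exact ⟨⟨0, S.hl⟩, Or.inl h⟩
    · obtain ⟨j, hj⟩ := Fin.exists_succ_eq.mpr h
      exact ⟨j, Or.inr hj.symm⟩
  obtain ⟨c, hc⟩ := S.highest _ (S.α_mem j.succ)
  -- `a` are the coordinates of the highest root `θ = -α 0`, and `a j ≥ 1`
  set a : Fin S.l → ℝ := fun i => c i + (Pi.single j 1 : Fin S.l → ℝ) i with ha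
  have hθ : ∑ i, a i • S.α i.succ = -S.α 0 := by
    simp only [ha, add_smul, Finset.sum_add_distrib, ← hc, Pi.single_apply, ite_smul, one_smul,
      zero_smul, Finset.sum_ite_eq', Finset.mem_univ, if_true]
    abel
  have hcoeff : ∑ i, (b i.succ - b 0 * a i) • S.α i.succ = 0 := by
    rw [← hb, Fin.sum_univ_succ, ← neg_neg (S.α 0), ← hθ, smul_neg, Finset.smul_sum,
      ← Finset.sum_neg_distrib, ← Finset.sum_add_distrib]
    exact Finset.sum_congr rfl fun i _ => by module
  have hsucc := Fintype.linearIndependent_iff.mp S.indep _ hcoeff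
  have hb0 : b 0 = 0 := by
    rcases hj with rfl | rfl
    · exact hi₀
    · have := hsucc j
      simp only [hi₀, ha, Pi.single_eq_same] at this
      nlinarith [(c j).cast_nonneg (α := ℝ)]
  funext k
  refine Fin.cases hb0 (fun i => ?_) k
  simpa [hb0] using hsucc i

lemma linearIndepOn_α_ne (i₀ : Fin (S.l + 1)) : LinearIndepOn ℝ S.α {k | k ≠ i₀} := by
  refine linearIndepOn_iff.mpr fun b hb hsum => ?_
  rw [Finsupp.linearCombination_apply, Finsupp.sum_fintype _ _ (by simp)] at hsum
  exact DFunLike.coe_injective <|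
    S.eq_zero_of_sum_smul_α_eq_zero hsum ((Finsupp.mem_supported' ℝ b).mp hb i₀ (by simp))

lemma exists_forall_α_apply_add_kd_eq_zero [FiniteDimensional ℝ 𝔱]
    {I : Finset (Fin (S.l + 1))} (hI : I.Nonempty) :
    ∃ p : 𝔱, ∀ k ∉ I, S.α k p + S.kd k = 0 := by
  obtain ⟨i₀, hi₀⟩ := hI
  have hli : LinearIndepOn ℝ S.α {k | k ∉ I} :=
    (S.linearIndepOn_α_ne i₀).mono fun k hk h => hk (h ▸ hi₀)
  obtain ⟨p, hp⟩ := exists_forall_dual_apply_eq hli (fun k => -S.kd k)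
  exact ⟨p, fun k hk => by rw [hp ⟨k, hk⟩, neg_add_cancel]⟩

lemma exists_forall_WIB_apply_eq [FiniteDimensional ℝ 𝔱] {I : Finset (Fin (S.l + 1))}
    (hI : I.Nonempty) : ∃ p : 𝔱, ∀ w ∈ S.WIB I, w p = p := by
  obtain ⟨p, hp⟩ := S.exists_forall_α_apply_add_kd_eq_zero hI
  refine ⟨p, fun w hw => ?_⟩
  induction hw using Subgroup.closure_induction with
  | mem w hw =>
    obtain ⟨k, hk, rfl⟩ := hw
    exact S.rrefl_apply_eq_self (hp k hk)
  | one => rfl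
  | mul w u _ _ hw hu => exact (congrArg w hu).trans hw
  | inv w _ hw => exact (inv_apply_eq_iff w).mpr hw.symm

lemma linear_mem_dualStabilizer {w : 𝔱 ≃ᵃ[ℝ] 𝔱} (hw : w ∈ S.WaffB) :
    w.linear ∈ dualStabilizer S.R := by
  suffices S.WaffB ≤ (dualStabilizer S.R).comap AffineEquiv.linearHom from this hw
  refine (Subgroup.closure_le _).mpr (Set.range_subset_iff.mpr fun k => ?_)
  refine mem_dualStabilizer_of_mul_self ?_ fun γ hγ => ?_
  · have h := congrArg AffineEquiv.linearHom (S.rrefl_mul_self k)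
    rwa [map_mul, map_one] at h
  · have hcomp :
        γ ∘ₗ (S.rrefl k).linear.toLinearMap = γ - γ (S.coroot (S.α k)) • S.α k := by
      ext x
      simp only [rrefl, aref_linear, LinearMap.coe_comp, LinearEquiv.coe_coe, comp_apply,
        Module.reflection_apply, map_sub, map_smul, smul_eq_mul, LinearMap.sub_apply,
        LinearMap.smul_apply, sub_right_inj]
      ring
    simpa [hcomp] using S.reflect_mem _ (S.α_mem k) γ hγ

lemma finite_WIB [FiniteDimensional ℝ 𝔱] {I : Finset (Fin (S.l + 1))} (hI : I.Nonempty) :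
    Finite (S.WIB I) := by
  obtain ⟨p, hp⟩ := S.exists_forall_WIB_apply_eq hI
  have := finite_dualStabilizer S.finR S.spanR
  refine Finite.of_injective (fun w : S.WIB I =>
    (⟨w.1.linear, S.linear_mem_dualStabilizer (S.WIB_le_WaffB I w.2)⟩ : dualStabilizer S.R))
    fun w w' h => ?_
  -- an affine map is determined by its linear part and the image of one point
  refine Subtype.ext (AffineEquiv.toAffineMap_injective (AffineMap.ext_linear ?_ (p := p) ?_))
  · simpa using congrArg (fun e : dualStabilizer S.R => e.1.toLinearMap) h
  · simp [hp _ w.2, hp _ w'.2]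

def zvas (ξ : 𝔱) (I : Finset (Fin (S.l + 1))) : AddSubgroup (𝔱 → ℤ) where
  carrier := S.ZVAS ξ I
  zero_mem' := ⟨by simp, by simp, fun _ _ _ => by simp⟩
  add_mem' {φ ψ} hφ hψ := ⟨(hφ.1.union hψ.1).subset (support_add φ ψ),
    (support_add φ ψ).trans (Set.union_subset hφ.2.1 hψ.2.1),
    fun w hw x => by simp [hφ.2.2 w hw x, hψ.2.2 w hw x, mul_add]⟩
  neg_mem' {φ} hφ := ⟨by rw [support_neg]; exact hφ.1, by rw [support_neg]; exact hφ.2.1,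
    fun w hw x => by simp [hφ.2.2 w hw x]⟩

def chainGroup (ξ : 𝔱) (p : ℕ) : AddSubgroup (Finset (Fin (S.l + 1)) → 𝔱 → ℤ) where
  carrier := S.ChainB ξ p
  zero_mem' I := ⟨fun _ => (S.zvas ξ I).zero_mem, fun _ => rfl⟩
  add_mem' hc hc' I := ⟨fun h => (S.zvas ξ I).add_mem ((hc I).1 h) ((hc' I).1 h),
    fun h => by simp [(hc I).2 h, (hc' I).2 h]⟩
  neg_mem' hc I := ⟨fun h => (S.zvas ξ I).neg_mem ((hc I).1 h), fun h => by simp [(hc I).2 h]⟩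

def boundaries (ξ : 𝔱) (Srep : Finset (Fin (S.l + 1)) → Finset (Fin (S.l + 1)) →
    Finset (𝔱 ≃ᵃ[ℝ] 𝔱)) : AddSubgroup (Finset (Fin (S.l + 1)) → 𝔱 → ℤ) :=
  (S.chainGroup ξ 1).map (bdGenHom Srep)

def skChain (I : Finset (Fin (S.l + 1))) (x : 𝔱) : Finset (Fin (S.l + 1)) → 𝔱 → ℤ :=
  single I (SkOrb (S.WIB I) x)

lemma SkOrb_mem_zvas [FiniteDimensional ℝ 𝔱] {I : Finset (Fin (S.l + 1))} (hI : I.Nonempty)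
    {ξ x : 𝔱} (hx : x ∈ S.orbB ξ) : SkOrb (S.WIB I) x ∈ S.zvas ξ I := by
  have := S.finite_WIB hI
  refine ⟨((S.WIB I : Set (𝔱 ≃ᵃ[ℝ] 𝔱)).toFinite.image _).subset
      (support_SkOrb_subset x),
    fun y hy => ?_, antiInv_SkOrb (S.WIB_le_detPmOne I) x⟩
  obtain ⟨w, hw, rfl⟩ := support_SkOrb_subset x hy
  exact S.apply_mem_orbB hx (S.WIB_le_WaffB I hw)

lemma skChain_mem_chainGroup [FiniteDimensional ℝ 𝔱] {I : Finset (Fin (S.l + 1))} {p : ℕ}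
    (hI : I.card = p + 1) {ξ x : 𝔱} (hx : x ∈ S.orbB ξ) :
    S.skChain I x ∈ S.chainGroup ξ p := by
  refine fun K => ⟨fun _ => ?_, fun hK => if_neg (by rintro rfl; exact hK hI)⟩
  by_cases h : K = I
  · subst h
    simp only [skChain, single]
    exact S.SkOrb_mem_zvas (Finset.card_pos.mp (by omega)) hx
  · simp only [skChain, single, if_neg h]
    exact (S.zvas ξ K).zero_mem

lemma skChain_apply_of_mem {I : Finset (Fin (S.l + 1))} {w : 𝔱 ≃ᵃ[ℝ] 𝔱}
    (hw : w ∈ S.WIB I) (x : 𝔱) : S.skChain I (w x) = asign w • S.skChain I x := by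
  funext K
  by_cases h : K = I <;>
    simp [skChain, single, h, SkOrb_apply_of_mem (S.WIB_le_detPmOne I) hw]



variable
  {Srep : Finset (Fin (S.l + 1)) → Finset (Fin (S.l + 1)) → Finset (𝔱 ≃ᵃ[ℝ] 𝔱)}

lemma bdGen_skChain_pair [FiniteDimensional ℝ 𝔱] (hSrep : S.RepFamilyB Srep)
    {i j : Fin (S.l + 1)} (hij : i < j) (x : 𝔱) :
    bdGen Srep (S.skChain {i, j} x) = S.skChain {j} x - S.skChain {i} x := by
  have := S.finite_WIB (I := {i, j}) (Finset.insert_nonempty _ _)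
  have hSk : ∀ K ⊆ {i, j}, K.Nonempty →
      SkRep (Srep K {i, j}) (SkOrb (S.WIB {i, j}) x) = SkOrb (S.WIB K) x := fun K hK hKne =>
    SkRep_SkOrb (hSrep K _ hKne hK) (S.WIB_anti hK) (S.WIB_le_detPmOne K) x
  funext K
  by_cases hKi : K = {i}
  · subst hKi
    rw [skChain, bdGen_single_of_insert_eq Srep (k := j) (by simpa using hij.ne')
      (Finset.pair_comm j i), hSk _ (by simp) (by simp)]
    simp [skChain, single, Finset.filter_singleton, hij, hij.ne]
  by_cases hKj : K = {j}
  · subst hKj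
    rw [skChain, bdGen_single_of_insert_eq Srep (k := i) (by simpa using hij.ne) rfl,
      hSk _ (by simp) (by simp)]
    simp [skChain, single, Finset.filter_singleton, hij.not_gt, hij.ne']
  · rw [skChain, bdGen_single_eq_zero Srep fun k hk h => ?_]
    · simp [skChain, single, hKi, hKj]
    have hK : K = ({i, j} : Finset _).erase k := by rw [← h, Finset.erase_insert hk]
    have hk' : k ∈ ({i, j} : Finset _) := h ▸ Finset.mem_insert_self k K
    rcases Finset.mem_insert.mp hk' with rfl | hkj
    · simp [hij.ne] at hK
      exact hKj hK
    · rw [Finset.mem_singleton.mp hkj, Finset.pair_comm,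
        Finset.erase_insert (by simpa using hij.ne')] at hK
      exact hKi hK



lemma skChain_sub_skChain_mem_boundaries [FiniteDimensional ℝ 𝔱] (hSrep : S.RepFamilyB Srep)
    {ξ x : 𝔱} (hx : x ∈ S.orbB ξ) (i j : Fin (S.l + 1)) :
    S.skChain {i} x - S.skChain {j} x ∈ S.boundaries ξ Srep := by
  wlog hij : i < j generalizing i j
  · rcases (not_lt.mp hij).lt_or_eq with hji | rfl
    · simpa using neg_mem (this j i hji)
    · simp [zero_mem]
  have hbd := AddSubgroup.mem_map_of_mem (bdGenHom Srep)
    (S.skChain_mem_chainGroup (Finset.card_pair hij.ne) hx)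
  rwa [show bdGenHom Srep _ = _ from S.bdGen_skChain_pair hSrep hij x, ← neg_mem_iff, neg_sub]
    at hbd

lemma skChain_sub_asign_smul_mem_boundaries [FiniteDimensional ℝ 𝔱] (hSrep : S.RepFamilyB Srep)
    {ξ : 𝔱} (i : Fin (S.l + 1)) {w : 𝔱 ≃ᵃ[ℝ] 𝔱} (hw : w ∈ S.WaffB) :
    ∀ x ∈ S.orbB ξ,
      S.skChain {i} x - asign w • S.skChain {i} (w x) ∈ S.boundaries ξ Srep := by
  induction hw using Subgroup.closure_induction with
  | mem w hw =>
    obtain ⟨k, rfl⟩ := hw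
    intro x hx
    have : Nontrivial (Fin (S.l + 1)) := Fin.nontrivial_iff_two_le.mpr (by have := S.hl; omega)
    obtain ⟨j, hjk⟩ := exists_ne k
    have hj : S.skChain {j} x = asign (S.rrefl k) • S.skChain {j} (S.rrefl k x) := by
      rw [S.skChain_apply_of_mem (S.rrefl_mem_WIB (by simpa using hjk.symm)), smul_smul,
        asign_mul_self, one_smul]
    have := add_mem (S.skChain_sub_skChain_mem_boundaries hSrep hx i j)
      (zsmul_mem (S.skChain_sub_skChain_mem_boundaries hSrep
        (S.apply_mem_orbB hx (S.rrefl_mem_WaffB k)) j i) (asign (S.rrefl k)))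
    convert this using 1
    rw [hj, smul_sub]
    abel
  | one => simp [asign_one]
  | mul w u hw hu ihw ihu =>
    intro x hx
    have := add_mem (ihu x hx) (zsmul_mem (ihw (u x) (S.apply_mem_orbB hx hu)) (asign u))
    convert this using 1
    rw [asign_mul (S.WaffB_le_detPmOne hw) (S.WaffB_le_detPmOne hu), AffineEquiv.coe_mul,
      comp_apply, smul_sub, smul_smul, mul_comm]
    abel
  | inv w hw ihw =>
    intro x hx
    have := neg_mem (zsmul_mem (ihw (w⁻¹ x) (S.apply_mem_orbB hx (inv_mem hw))) (asign w))
    convert this using 1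
    rw [asign_inv (S.WaffB_le_detPmOne hw), show w (w⁻¹ x) = x from w.apply_symm_apply x,
      smul_sub, smul_smul, asign_mul_self, one_smul]
    abel

end RSD

end CCQ

open CCQ Function

theorem statement14_general {𝔱 : Type} [NormedAddCommGroup 𝔱] [InnerProductSpace ℝ 𝔱]
    [FiniteDimensional ℝ 𝔱] (S : RSD 𝔱)
    (ξJ : 𝔱)
    (Srep : Finset (Fin (S.l + 1)) → Finset (Fin (S.l + 1)) → Finset (𝔱 ≃ᵃ[ℝ] 𝔱))
    (hSrep : S.RepFamilyB Srep)
    (i j : Fin (S.l + 1)) (x : 𝔱) (hx : x ∈ S.orbB ξJ) :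
    (∃ d ∈ S.ChainB ξJ 1, bdGen Srep d =
      single {i} (SkOrb (S.WIB {i}) x) - single {j} (SkOrb (S.WIB {j}) x)) ∧
    (∀ w ∈ S.WaffB, ∃ d ∈ S.ChainB ξJ 1, bdGen Srep d =
      single {i} (SkOrb (S.WIB {i}) x) -
        asign w • single {i} (SkOrb (S.WIB {i}) (w x))) :=
  ⟨AddSubgroup.mem_map.mp (S.skChain_sub_skChain_mem_boundaries hSrep hx i j),
    fun _ hw => AddSubgroup.mem_map.mp (S.skChain_sub_asign_smul_mem_boundaries hSrep i hw x hx)⟩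

/-- in `C_0(J)`, writing `φ ∼ φ'` for `φ - φ' ∈ ∂(C_1(J))`: for all
`i, j ∈ {0,…,l}` and `x ∈ V`, the element `Sk^{{i}}(x)` (in the `i`-th summand)
satisfies `Sk^{{i}}(x) ∼ Sk^{{j}}(x)` (in the `j`-th summand), and
`Sk^{{i}}(x) ∼ det(w)·Sk^{{i}}(w·x)` for every `w ∈ W_aff`. -/
theorem statement14 {𝔱 : Type} [NormedAddCommGroup 𝔱] [InnerProductSpace ℝ 𝔱]
    [FiniteDimensional ℝ 𝔱] (S : RSD 𝔱)
    (hBinv : ∀ β ∈ S.R, ∀ x y : 𝔱,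
      ⟪x - β x • S.coroot β, y - β y • S.coroot β⟫_ℝ = ⟪x, y⟫_ℝ)
    (hBnorm : ⟪S.coroot S.theta, S.coroot S.theta⟫_ℝ = 2)
    (J : Finset (Fin (S.l + 1))) (hJ : J.Nonempty)
    (ξJ : 𝔱) (hξJ : ∀ η : 𝔱, ⟪ξJ, η⟫_ℝ = S.nuI J η)
    (Srep : Finset (Fin (S.l + 1)) → Finset (Fin (S.l + 1)) → Finset (𝔱 ≃ᵃ[ℝ] 𝔱))
    (hSrep : S.RepFamilyB Srep)
    (i j : Fin (S.l + 1)) (x : 𝔱) (hx : x ∈ S.orbB ξJ) :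
    (∃ d ∈ S.ChainB ξJ 1, bdGen Srep d =
      single {i} (SkOrb (S.WIB {i}) x) - single {j} (SkOrb (S.WIB {j}) x)) ∧
    (∀ w ∈ S.WaffB, ∃ d ∈ S.ChainB ξJ 1, bdGen Srep d =
      single {i} (SkOrb (S.WIB {i}) x) -
        asign w • single {i} (SkOrb (S.WIB {i}) (w x))) :=
  statement14_general S ξJ Srep hSrep i j x hx
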